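/- Generalised Harrop's rule for disjunction-free antecedents in the complete system (Piecha–Schroeder-Heister 2015): For every disjunction-free propositional formula A (built from atoms using only ∧ and →) and all propositional formulas B, C, the complete system validates (A→(B∨C))→((A→B)∨(A→C)), i.e., for every set S of atomic rules there is a closed S-valid argument for this formula. -/

import Mathlib

/-!
Common framework for proof-theoretic validity (Prawitz / Piecha–Schroeder-Heister style).

* Propositional formulas over countably many atoms (`ℕ`), with `⊥`, `∧`, `∨`, `→`;
  `¬A` abbreviates `A → ⊥`.
* Higher-level atomic rules: a rule has a finite list of premises, each premise being
  a pair of (a finite list of lower-level rules that may be discharged, an atomic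
  conclusion), together with an atomic conclusion.  An atomic axiom `p̄` is
  `HLRule.mk [] p`; an assumption of an atom is identified with its axiom rule.
* `AtDeriv S p`: the atom `p` is derivable using only rules of `S`
  (discharged rules become available).
* `Deriv S Γ φ`: natural deduction NJ augmented with the atomic rules in `S`,
  from hypotheses `Γ`.  `⊢_IPC` is `Deriv ∅ ∅`.
* `Valid 𝔖 S φ` formalizes "there is a closed `S`-valid argument for `φ`" relative to
  the proof-theoretic system `𝔖` (acceptable extensions of `S` are the supersets of `S`
  belonging to `𝔖`).  Unfolding the inductive definition of `S`-validity of arguments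
  (atomic case, closed introduction case, closed non-introduction case, open case)
  clause-by-clause on the conclusion yields exactly the following recursion on formulas:
  a closed valid argument for `A ∧ B` reduces (via the non-introduction case) to one
  ending in `∧`-introduction, i.e. closed valid arguments for `A` and `B`; similarly for
  `∨`; a closed valid argument for `A → B` reduces to one ending in `→`-introduction,
  whose immediate subargument is an open argument of `B` from the assumption `A`, which
  by the open case is valid iff every acceptable extension `S' ∈ 𝔖` of `S` having a
  closed `S'`-valid argument for `A` has one for `B`; a closed valid argument for an
  atom `p` exists iff `p` is `S`-derivable; and for `⊥` (which has no introduction rule,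
  and is governed by the rules `⊥/p` for every atom `p`) iff every atom is `S`-derivable.
-/

/-- Propositional formulas over atoms `ℕ`. -/
inductive PropForm : Type
  | atom : ℕ → PropForm
  | falsum : PropForm
  | conj : PropForm → PropForm → PropForm
  | disj : PropForm → PropForm → PropForm
  | impl : PropForm → PropForm → PropForm
  deriving DecidableEq

/-- `¬A` abbreviates `A → ⊥`. -/
def PropForm.neg (A : PropForm) : PropForm := .impl A .falsum

/-- Higher-level atomic rules. -/
inductive HLRule : Type
  | mk : List (List HLRule × ℕ) → ℕ → HLRule

/-- `AtDeriv S p`: the atom `p` is derivable using only the atomic rules in `S`;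
applying a rule requires deriving each premise with its discharged rules made available. -/
inductive AtDeriv : Set HLRule → ℕ → Prop
  | app (S : Set HLRule) (prems : List (List HLRule × ℕ)) (concl : ℕ)
      (hmem : HLRule.mk prems concl ∈ S)
      (hprem : ∀ pr ∈ prems, AtDeriv (S ∪ {R | R ∈ pr.1}) pr.2) :
      AtDeriv S concl

/-- Natural deduction NJ for intuitionistic propositional logic, augmented with the
atomic rules in `S`, with hypotheses `Γ`.  `Deriv ∅ Γ φ` is `Γ ⊢_IPC φ`. -/
inductive Deriv : Set HLRule → Set PropForm → PropForm → Prop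
  | hyp {S : Set HLRule} {Γ : Set PropForm} {A : PropForm} :
      A ∈ Γ → Deriv S Γ A
  | falsumE {S : Set HLRule} {Γ : Set PropForm} {A : PropForm} :
      Deriv S Γ .falsum → Deriv S Γ A
  | andI {S : Set HLRule} {Γ : Set PropForm} {A B : PropForm} :
      Deriv S Γ A → Deriv S Γ B → Deriv S Γ (.conj A B)
  | andE1 {S : Set HLRule} {Γ : Set PropForm} {A B : PropForm} :
      Deriv S Γ (.conj A B) → Deriv S Γ A
  | andE2 {S : Set HLRule} {Γ : Set PropForm} {A B : PropForm} :
      Deriv S Γ (.conj A B) → Deriv S Γ B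
  | orI1 {S : Set HLRule} {Γ : Set PropForm} {A B : PropForm} :
      Deriv S Γ A → Deriv S Γ (.disj A B)
  | orI2 {S : Set HLRule} {Γ : Set PropForm} {A B : PropForm} :
      Deriv S Γ B → Deriv S Γ (.disj A B)
  | orE {S : Set HLRule} {Γ : Set PropForm} {A B C : PropForm} :
      Deriv S Γ (.disj A B) → Deriv S (insert A Γ) C → Deriv S (insert B Γ) C →
      Deriv S Γ C
  | implI {S : Set HLRule} {Γ : Set PropForm} {A B : PropForm} :
      Deriv S (insert A Γ) B → Deriv S Γ (.impl A B)
  | implE {S : Set HLRule} {Γ : Set PropForm} {A B : PropForm} :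
      Deriv S Γ (.impl A B) → Deriv S Γ A → Deriv S Γ B
  | rule {S : Set HLRule} {Γ : Set PropForm}
      (prems : List (List HLRule × ℕ)) (concl : ℕ) :
      HLRule.mk prems concl ∈ S →
      (∀ pr ∈ prems, Deriv (S ∪ {R | R ∈ pr.1}) Γ (.atom pr.2)) →
      Deriv S Γ (.atom concl)

/-- `⊢_IPC φ` : derivability of `φ` in intuitionistic propositional natural deduction. -/
def IPC (φ : PropForm) : Prop := Deriv ∅ ∅ φ

/-- Auxiliary form of validity, by recursion on the formula. -/
def ValidAux (𝔖 : Set (Set HLRule)) : PropForm → Set HLRule → Prop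
  | .atom p, S => AtDeriv S p
  | .falsum, S => ∀ a : ℕ, AtDeriv S a
  | .conj A B, S => ValidAux 𝔖 A S ∧ ValidAux 𝔖 B S
  | .disj A B, S => ValidAux 𝔖 A S ∨ ValidAux 𝔖 B S
  | .impl A B, S => ∀ S' ∈ 𝔖, S ⊆ S' → ValidAux 𝔖 A S' → ValidAux 𝔖 B S'

/-- `Valid 𝔖 S φ`: relative to the proof-theoretic system `𝔖` (in which the acceptable
extensions of `S` are exactly the supersets of `S` belonging to `𝔖`), there is a closed
`S`-valid argument for `φ`. -/
def Valid (𝔖 : Set (Set HLRule)) (S : Set HLRule) (φ : PropForm) : Prop :=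
  ValidAux 𝔖 φ S

/-- `𝔖 ⊨ φ`: for every `S ∈ 𝔖` there is a closed `S`-valid argument for `φ`
(acceptable extensions taken in `𝔖`). -/
def Models (𝔖 : Set (Set HLRule)) (φ : PropForm) : Prop :=
  ∀ S ∈ 𝔖, Valid 𝔖 S φ

/-- The complete proof-theoretic system: all sets of atomic rules of all levels. -/
def completeSystem : Set (Set HLRule) := Set.univ

/-- `S`-validity of the open one-premise/one-assumption argument from `A` to `B`
(relative to `𝔖`): by the open case, for every acceptable extension `S' ∈ 𝔖` of `S`,
substituting any closed `S'`-valid argument for the assumption `A` yields an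
`S'`-valid closed argument, which (the final step not being an introduction rule)
amounts to the existence of a closed `S'`-valid argument for `B`. -/
def OpenArgValid1 (𝔖 : Set (Set HLRule)) (S : Set HLRule) (A B : PropForm) : Prop :=
  ∀ S' ∈ 𝔖, S ⊆ S' → Valid 𝔖 S' A → Valid 𝔖 S' B

/-- Disjunction-free formulas: built from atoms using only `∧` and `→`. -/
def DisjFree : PropForm → Prop
  | .atom _ => True
  | .falsum => False
  | .conj A B => DisjFree A ∧ DisjFree B
  | .disj _ _ => False
  | .impl A B => DisjFree A ∧ DisjFree B

/-!
A disjunction-free formula `A` is determined, as far as validity goes, by its clauses: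
nested Horn implications between atoms. Read as atomic rules of higher level, they form a
set `R(A)` such that `A` is valid in `S ∪ R(A)` for every `S`, while every rule of `R(A)` is
admissible in any `S` in which `A` is valid, so that adding `R(A)` to such an `S` is
conservative for validity of all formulas. Now if `A → B ∨ C` is valid in `S`, then `B ∨ C`
is valid in `S ∪ R(A)`, say `B`; for every extension `U` of `S` validating `A`, `B` is then
valid in `U ∪ R(A)` and hence, by conservativity, in `U`: thus `A → B` is valid in `S`.
-/

lemma setOf_mem_append {α : Type*} (l₁ l₂ : List α) :
    {x | x ∈ l₁ ++ l₂} = {x | x ∈ l₁} ∪ {x | x ∈ l₂} :=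
  Set.ext fun _ => List.mem_append

lemma AtDeriv.mono {S T : Set HLRule} {p : ℕ} (h : AtDeriv S p) (hST : S ⊆ T) :
    AtDeriv T p := by
  induction h generalizing T with
  | app S prems concl hmem _ ih =>
    exact .app T prems concl (hST hmem)
      fun pr hpr => ih pr hpr (Set.union_subset_union_left _ hST)

lemma Valid.mono {𝔖 : Set (Set HLRule)} {S T : Set HLRule} {B : PropForm}
    (hv : Valid 𝔖 S B) (hST : S ⊆ T) : Valid 𝔖 T B := by
  induction B generalizing S T with
  | atom p => exact AtDeriv.mono hv hST
  | falsum => exact fun a => AtDeriv.mono (hv a) hST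
  | conj B₁ B₂ ih₁ ih₂ => exact ⟨ih₁ hv.1 hST, ih₂ hv.2 hST⟩
  | disj B₁ B₂ ih₁ ih₂ => exact hv.imp (ih₁ · hST) (ih₂ · hST)
  | impl B₁ B₂ => exact fun U hU hTU => hv U hU (hST.trans hTU)

def Admissible (S : Set HLRule) : HLRule → Prop
  | .mk prems q => (∀ pr ∈ prems, AtDeriv (S ∪ {R | R ∈ pr.1}) pr.2) → AtDeriv S q

lemma AtDeriv.of_union_of_admissible {S Rs : Set HLRule} {q : ℕ}
    (hadm : ∀ U, S ⊆ U → ∀ R ∈ Rs, Admissible U R) (h : AtDeriv (S ∪ Rs) q) :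
    AtDeriv S q := by
  suffices ∀ {T}, AtDeriv T q → ∀ U, S ⊆ U → T ⊆ U ∪ Rs → AtDeriv U q from
    this h S subset_rfl subset_rfl
  intro T hT
  clear h
  induction hT with
  | app T prems concl hmem _ ih =>
    intro U hSU hTU
    have hprems : ∀ pr ∈ prems, AtDeriv (U ∪ {R | R ∈ pr.1}) pr.2 := fun pr hpr =>
      ih pr hpr _ (hSU.trans Set.subset_union_left) (by tauto_set)
    rcases hTU hmem with hU | hR
    · exact .app U prems concl hU hprems
    · exact hadm U hSU _ hR hprems

lemma Valid.of_union_of_admissible {S Rs : Set HLRule} {B : PropForm}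
    (hadm : ∀ U, S ⊆ U → ∀ R ∈ Rs, Admissible U R)
    (hB : Valid completeSystem (S ∪ Rs) B) : Valid completeSystem S B := by
  induction B generalizing S with
  | atom p => exact AtDeriv.of_union_of_admissible hadm hB
  | falsum => exact fun a => AtDeriv.of_union_of_admissible hadm (hB a)
  | conj B₁ B₂ ih₁ ih₂ => exact ⟨ih₁ hadm hB.1, ih₂ hadm hB.2⟩
  | disj B₁ B₂ ih₁ ih₂ => exact hB.imp (ih₁ hadm) (ih₂ hadm)
  | impl B₁ B₂ _ ih₂ =>
    intro U _ hSU hU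
    have hU' : Valid completeSystem (U ∪ Rs) B₁ := Valid.mono hU Set.subset_union_left
    exact ih₂ (fun V hUV => hadm V (hSU.trans hUV))
      (hB (U ∪ Rs) trivial (Set.union_subset_union_left _ hSU) hU')

/-- A clause `hyps ⇒ head` of a disjunction-free formula, kept in two forms: as the atomic
rule `prems / head`, and as the premise `head` discharging the rules `hyps`.  The lists
`hyps` and `prems` hold the same hypothesis clauses, in rule and in premise form. -/
structure Clause where
  hyps : List HLRule
  prems : List (List HLRule × ℕ)
  head : ℕ

namespace Clause

def rule (c : Clause) : HLRule := .mk c.prems c.head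

def premise (c : Clause) : List HLRule × ℕ := (c.hyps, c.head)

def addHyps (Γ : List Clause) (c : Clause) : Clause :=
  ⟨Γ.map rule ++ c.hyps, Γ.map premise ++ c.prems, c.head⟩

def HypsDerivePrems (c : Clause) : Prop :=
  ∀ T, ∀ pr ∈ c.prems, AtDeriv (T ∪ {R | R ∈ c.hyps} ∪ {R | R ∈ pr.1}) pr.2

lemma HypsDerivePrems.atDeriv_head {c : Clause} {T : Set HLRule} (hc : c.HypsDerivePrems)
    (hR : c.rule ∈ T) : AtDeriv (T ∪ {R | R ∈ c.hyps}) c.head :=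
  .app _ c.prems c.head (Or.inl hR) (hc T)

end Clause

open Clause

def clauses : PropForm → List Clause
  | .atom p => [⟨[], [], p⟩]
  | .conj A B => clauses A ++ clauses B
  | .impl A B => (clauses B).map (addHyps (clauses A))
  | .falsum | .disj _ _ => []

def clauseRules (A : PropForm) : Set HLRule := {R | R ∈ (clauses A).map rule}

lemma setOf_mem_hyps_addHyps (A : PropForm) (c : Clause) :
    {R | R ∈ (c.addHyps (clauses A)).hyps} = clauseRules A ∪ {R | R ∈ c.hyps} :=
  setOf_mem_append _ _

lemma hypsDerivePrems_of_mem_clauses {A : PropForm} {c : Clause} (hc : c ∈ clauses A) :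
    c.HypsDerivePrems := by
  induction A generalizing c with
  | atom p => simp_all [clauses, HypsDerivePrems]
  | conj A₁ A₂ ih₁ ih₂ => exact (List.mem_append.1 hc).elim ih₁ ih₂
  | impl A₁ A₂ ih₁ ih₂ =>
    obtain ⟨c', hc', rfl⟩ := List.mem_map.1 hc
    intro T pr hpr
    rw [setOf_mem_hyps_addHyps]
    rcases List.mem_append.1 hpr with hpr | hpr
    · obtain ⟨c'', hc'', rfl⟩ := List.mem_map.1 hpr
      exact (ih₁ hc'').atDeriv_head (Or.inr (Or.inl (List.mem_map_of_mem hc'')))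
    · exact (ih₂ hc' T pr hpr).mono (by tauto_set)
  | falsum | disj => simp [clauses] at hc

structure ClauseSemantics (A : PropForm) : Prop where
  valid_iff (S : Set HLRule) : Valid completeSystem S A ↔
    ∀ c ∈ clauses A, AtDeriv (S ∪ {R | R ∈ c.hyps}) c.head
  admissible (S : Set HLRule) : Valid completeSystem S A →
    ∀ c ∈ clauses A, Admissible S c.rule

namespace ClauseSemantics

variable {A : PropForm}

lemma valid_union_clauseRules (h : ClauseSemantics A) (S : Set HLRule) :
    Valid completeSystem (S ∪ clauseRules A) A :=
  (h.valid_iff _).2 fun _ hc =>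
    (hypsDerivePrems_of_mem_clauses hc).atDeriv_head (Or.inr (List.mem_map_of_mem hc))

lemma valid_of_valid_union (h : ClauseSemantics A) {S : Set HLRule} {B : PropForm}
    (hA : Valid completeSystem S A) (hB : Valid completeSystem (S ∪ clauseRules A) B) :
    Valid completeSystem S B := by
  refine Valid.of_union_of_admissible (fun U hSU R hR => ?_) hB
  obtain ⟨c, hc, rfl⟩ := List.mem_map.1 hR
  exact h.admissible U (hA.mono hSU) c hc

lemma valid_impl_of_valid_union (h : ClauseSemantics A) {S : Set HLRule} {B : PropForm}
    (hB : Valid completeSystem (S ∪ clauseRules A) B) : Valid completeSystem S (.impl A B) :=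
  fun _ _ hSU hA => h.valid_of_valid_union hA (hB.mono (Set.union_subset_union_left _ hSU))

lemma atom (p : ℕ) : ClauseSemantics (.atom p) where
  valid_iff S := by simp [clauses, Valid, ValidAux]
  admissible S hp c hc := by
    simp only [clauses, List.mem_singleton] at hc
    exact hc ▸ fun _ => hp

lemma conj {A₁ A₂ : PropForm} (h₁ : ClauseSemantics A₁)
    (h₂ : ClauseSemantics A₂) : ClauseSemantics (.conj A₁ A₂) where
  valid_iff S := ((h₁.valid_iff S).and (h₂.valid_iff S)).trans List.forall_mem_append.symm
  admissible S hv c hc :=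
    (List.mem_append.1 hc).elim (h₁.admissible S hv.1 c) (h₂.admissible S hv.2 c)

lemma impl {A₁ A₂ : PropForm} (h₁ : ClauseSemantics A₁)
    (h₂ : ClauseSemantics A₂) : ClauseSemantics (.impl A₁ A₂) where
  valid_iff S := by
    constructor
    · intro hv c hc
      obtain ⟨c', hc', rfl⟩ := List.mem_map.1 hc
      have hA₂ : Valid completeSystem (S ∪ clauseRules A₁) A₂ :=
        hv _ trivial Set.subset_union_left (h₁.valid_union_clauseRules S)
      rw [setOf_mem_hyps_addHyps, ← Set.union_assoc]
      exact (h₂.valid_iff _).1 hA₂ c' hc'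
    · intro hcl U _ hSU hA₁
      refine (h₂.valid_iff U).2 fun c' hc' => ?_
      have hder := hcl _ (List.mem_map_of_mem hc')
      rw [setOf_mem_hyps_addHyps] at hder
      exact h₁.valid_of_valid_union (B := .atom c'.head) (Valid.mono hA₁ Set.subset_union_left)
        (hder.mono (by tauto_set))
  admissible S hv c hc := by
    obtain ⟨c', hc', rfl⟩ := List.mem_map.1 hc
    intro hprems
    have hA₁ : Valid completeSystem S A₁ := (h₁.valid_iff S).2 fun c'' hc'' =>
      hprems c''.premise (List.mem_append_left _ (List.mem_map_of_mem hc''))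
    exact h₂.admissible S (hv S trivial subset_rfl hA₁) c' hc'
      fun pr hpr => hprems pr (List.mem_append_right _ hpr)

end ClauseSemantics

lemma clauseSemantics_of_disjFree {A : PropForm} (hA : DisjFree A) : ClauseSemantics A := by
  induction A with
  | atom p => exact ClauseSemantics.atom p
  | conj A₁ A₂ ih₁ ih₂ => exact (ih₁ hA.1).conj (ih₂ hA.2)
  | impl A₁ A₂ ih₁ ih₂ => exact (ih₁ hA.1).impl (ih₂ hA.2)
  | falsum | disj => exact hA.elim

/-- **Generalised Harrop's rule for disjunction-free antecedents in the complete
system (Piecha–Schroeder-Heister 2015).**  For every disjunction-free formula `A` and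
all formulas `B, C`, every set `S` of atomic rules has a closed `S`-valid argument
(relative to the complete system) for `(A → (B ∨ C)) → ((A → B) ∨ (A → C))`. -/
theorem generalised_harrop_disjFree_valid (A B C : PropForm) (hA : DisjFree A)
    (S : Set HLRule) :
    Valid completeSystem S
      (.impl (.impl A (.disj B C)) (.disj (.impl A B) (.impl A C))) := by
  have hsem := clauseSemantics_of_disjFree hA
  intro S' _ _ hBC
  rcases hBC _ trivial Set.subset_union_left (hsem.valid_union_clauseRules S') with hB | hC
  · exact .inl (hsem.valid_impl_of_valid_union hB)
  · exact .inr (hsem.valid_impl_of_valid_union hC)
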